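/- arXiv:2102.13422 — 6 statements merged into one kernel-verified Lean document; each statement's English description precedes it below -/
import Mathlib

section
/- Suppose f : ℝ → ℝ satisfies (f1)–(f3), with exponent p ∈ (2,6) in (f2) and constant μ > 2 in (f3). Then μ ≤ p; hence 2 < μ ≤ p < 6. -/
open MeasureTheory Filter Topology

noncomputable section

/-- `ℝ³`. -/
abbrev R3 : Type := EuclideanSpace ℝ (Fin 3)

/-- `F(u) = ∫₀ᵘ f(s) ds`, the primitive of `f` vanishing at `0`. -/
def primitive (f : ℝ → ℝ) (u : ℝ) : ℝ := ∫ s in (0:ℝ)..u, f s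

/-- Test functions: smooth compactly supported functions on `ℝ³`. -/
def IsTestFun (φ : R3 → ℝ) : Prop := ContDiff ℝ (⊤ : ℕ∞) φ ∧ HasCompactSupport φ

/-- **Remark 1.1.** If `f` satisfies (f1)–(f3) with exponent `p ∈ (2,6)` in (f2) and
constant `μ > 2` in (f3), then `μ ≤ p`; hence `2 < μ ≤ p < 6`. -/
theorem mu_le_p_of_f1_f2_f3
    (p μ : ℝ) (f : ℝ → ℝ)
    (hp2 : 2 < p) (hp6 : p < 6)
    (hf : Continuous f)
    (hf1 : Tendsto (fun u => f u / u) (𝓝[≠] (0:ℝ)) (𝓝 0))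
    (hf2 : ∃ C : ℝ, ∀ᶠ u : ℝ in comap (fun u : ℝ => |u|) atTop,
      |f u| ≤ C * |u| ^ (p - 1))
    (hμ : 2 < μ)
    (hf3 : ∀ u : ℝ, u ≠ 0 → 0 < μ * primitive f u ∧ μ * primitive f u ≤ u * f u) :
    2 < μ ∧ μ ≤ p ∧ p < 6 := by
  refine ⟨hμ, ?_, hp6⟩
  by_contra hcon
  push_neg at hcon
  set F := primitive f with hFdef
  have hμ0 : (0:ℝ) < μ := by linarith
  have hF' : ∀ x : ℝ, HasDerivAt F (f x) x := fun x =>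
    intervalIntegral.integral_hasDerivAt_right (hf.intervalIntegrable _ _)
      (hf.stronglyMeasurableAtFilter _ _) hf.continuousAt
  have hFpos : ∀ u : ℝ, u ≠ 0 → 0 < F u := by
    intro u hu
    have h := (hf3 u hu).1
    nlinarith
  -- extract the bound from (f2)
  obtain ⟨C, hC⟩ := hf2
  rw [eventually_comap] at hC
  rw [eventually_atTop] at hC
  obtain ⟨M, hM⟩ := hC
  have hbound : ∀ u : ℝ, M ≤ |u| → |f u| ≤ C * |u| ^ (p - 1) := fun u hu => hM |u| hu u rfl
  set C' := max C 0 with hC'def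
  set M0 := max M 1 with hM0def
  have hC'0 : 0 ≤ C' := le_max_right _ _
  have hM01 : (1:ℝ) ≤ M0 := le_max_right _ _
  have hM00 : (0:ℝ) < M0 := by linarith
  -- lower bound: F u ≥ F 1 * u ^ μ for u ≥ 1
  set L := fun u : ℝ => Real.log (F u) - μ * Real.log u with hLdef
  have hLderiv : ∀ x : ℝ, 0 < x → HasDerivAt L (f x / F x - μ * x⁻¹) x := by
    intro x hx
    exact ((hF' x).log (hFpos x hx.ne').ne').sub ((Real.hasDerivAt_log hx.ne').const_mul μ)
  have hmono : MonotoneOn L (Set.Ici (1:ℝ)) := by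
    apply monotoneOn_of_deriv_nonneg (convex_Ici 1)
    · exact fun x hx =>
        (hLderiv x (lt_of_lt_of_le one_pos hx)).continuousAt.continuousWithinAt
    · intro x hx
      rw [interior_Ici] at hx
      exact (hLderiv x (lt_trans one_pos hx)).differentiableAt.differentiableWithinAt
    · intro x hx
      rw [interior_Ici] at hx
      have hx0 : (0:ℝ) < x := lt_trans one_pos hx
      rw [(hLderiv x hx0).deriv]
      have hFx : 0 < F x := hFpos x hx0.ne'
      have h1 := (hf3 x hx0.ne').2
      have hdiv : μ / x ≤ f x / F x := by
        rw [div_le_div_iff₀ hx0 hFx]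
        nlinarith
      rw [← div_eq_mul_inv]
      linarith
  have hF1 : 0 < F 1 := hFpos 1 one_ne_zero
  have hlow : ∀ u : ℝ, 1 ≤ u → F 1 * u ^ μ ≤ F u := by
    intro u hu
    have hu0 : (0:ℝ) < u := lt_of_lt_of_le one_pos hu
    have hFu : 0 < F u := hFpos u hu0.ne'
    have h := hmono Set.self_mem_Ici hu hu
    simp only [hLdef, Real.log_one, mul_zero, sub_zero] at h
    have hlog : Real.log (F 1 * u ^ μ) ≤ Real.log (F u) := by
      rw [Real.log_mul hF1.ne' (Real.rpow_pos_of_pos hu0 μ).ne', Real.log_rpow hu0]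
      linarith
    exact (Real.log_le_log_iff (by positivity) hFu).mp hlog
  -- upper bound: F u ≤ F M0 + C' * u ^ p for u ≥ M0
  have hup : ∀ u : ℝ, M0 ≤ u → F u ≤ F M0 + C' * u ^ p := by
    intro u hu
    have h1u : (1:ℝ) ≤ u := le_trans hM01 hu
    have hu0 : (0:ℝ) < u := by linarith
    have hsplit : F u = F M0 + ∫ s in M0..u, f s := by
      rw [hFdef]
      show primitive f u = primitive f M0 + _
      unfold primitive
      rw [← intervalIntegral.integral_add_adjacent_intervals
        (hf.intervalIntegrable 0 M0) (hf.intervalIntegrable M0 u)]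
    have hbd : (∫ s in M0..u, f s) ≤ ∫ s in M0..u, (C' * u ^ (p - 1) : ℝ) := by
      apply intervalIntegral.integral_mono_on hu (hf.intervalIntegrable _ _)
        intervalIntegrable_const
      intro s hs
      have hs1 : (1:ℝ) ≤ s := le_trans hM01 hs.1
      have hsabs : |s| = s := abs_of_nonneg (by linarith)
      have hsM : M ≤ |s| := by rw [hsabs]; exact le_trans (le_max_left M 1) hs.1
      calc f s ≤ |f s| := le_abs_self _
        _ ≤ C * |s| ^ (p - 1) := hbound s hsM
        _ ≤ C' * u ^ (p - 1) := by
            refine mul_le_mul (le_max_left C 0) ?_ (by positivity) hC'0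
            rw [hsabs]
            exact Real.rpow_le_rpow (by linarith) hs.2 (by linarith)
    have hconst : (∫ _ in M0..u, (C' * u ^ (p - 1) : ℝ)) = (u - M0) * (C' * u ^ (p - 1)) := by
      rw [intervalIntegral.integral_const, smul_eq_mul]
    have hkey : u ^ (p - 1) * u = u ^ p := by
      rw [← Real.rpow_add_one hu0.ne' (p - 1)]
      norm_num
    have hfin : (u - M0) * (C' * u ^ (p - 1)) ≤ C' * u ^ p := by
      have h1 : 0 ≤ u ^ (p - 1) := Real.rpow_nonneg hu0.le _
      nlinarith [hkey, mul_nonneg (mul_nonneg hM00.le hC'0) h1]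
    rw [hsplit]
    linarith [hbd, hconst ▸ hfin]
  -- combine
  set D := |F M0| + C' with hDdef
  have hcomb : ∀ u : ℝ, M0 ≤ u → F 1 * u ^ (μ - p) ≤ D := by
    intro u hu
    have h1u : (1:ℝ) ≤ u := le_trans hM01 hu
    have hu0 : (0:ℝ) < u := by linarith
    have hup1 : 1 ≤ u ^ p := Real.one_le_rpow h1u (by linarith)
    have h1 : F 1 * u ^ μ ≤ D * u ^ p := by
      have h2 := hup u hu
      have h3 := hlow u h1u
      have h4 : F M0 ≤ |F M0| * u ^ p := by
        nlinarith [le_abs_self (F M0), abs_nonneg (F M0)]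
      nlinarith [Real.rpow_nonneg hu0.le p]
    have hsplitpow : u ^ μ = u ^ (μ - p) * u ^ p := by
      rw [← Real.rpow_add hu0]; congr 1; ring
    rw [hsplitpow, ← mul_assoc] at h1
    exact le_of_mul_le_mul_right h1 (Real.rpow_pos_of_pos hu0 p)
  have htend : Tendsto (fun u : ℝ => F 1 * u ^ (μ - p)) atTop atTop :=
    (tendsto_rpow_atTop (by linarith : (0:ℝ) < μ - p)).const_mul_atTop hF1
  obtain ⟨u, hu1, hu2⟩ := ((htend.eventually_gt_atTop D).and (eventually_ge_atTop M0)).exists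
  exact absurd (hcomb u hu2) (not_le.mpr hu1)
end
end

section
/- Let f : ℝ → ℝ be continuous and suppose there exists μ > 2 such that u·f(u) ≥ μ·F(u) > 0 for all u ≠ 0, where F(u) = ∫₀^u f(s) ds. Then for every u ≠ 0 and every t ≥ 1, F(t·u) ≥ t^μ · F(u). -/
open MeasureTheory Filter Topology

noncomputable section

/-- **Monotonicity consequence of (f3).** If `u·f(u) ≥ μ·F(u) > 0` for all `u ≠ 0`
with `μ > 2`, then `F(t·u) ≥ t^μ·F(u)` for all `u ≠ 0` and `t ≥ 1`. -/
theorem primitive_scaling_of_f3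
    (μ : ℝ) (f : ℝ → ℝ) (hf : Continuous f) (hμ : 2 < μ)
    (hf3 : ∀ u : ℝ, u ≠ 0 → 0 < μ * primitive f u ∧ μ * primitive f u ≤ u * f u) :
    ∀ u : ℝ, u ≠ 0 → ∀ t : ℝ, 1 ≤ t →
      t ^ μ * primitive f u ≤ primitive f (t * u) := by
  intro u hu t ht
  have ht0 : (0:ℝ) < t := lt_of_lt_of_le one_pos ht
  have hFd : ∀ x : ℝ, HasDerivAt (primitive f) (f x) x := by
    intro x
    exact intervalIntegral.integral_hasDerivAt_right
      (hf.intervalIntegrable _ _) (hf.stronglyMeasurableAtFilter _ _) hf.continuousAt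
  set G : ℝ → ℝ := fun s => primitive f (s * u) * s ^ (-μ) with hG
  have hGd : ∀ x : ℝ, x ≠ 0 →
      HasDerivAt G (f (x * u) * u * x ^ (-μ) + primitive f (x * u) * (-μ * x ^ (-μ - 1))) x := by
    intro x hx
    have h1 : HasDerivAt (fun s : ℝ => primitive f (s * u)) (f (x * u) * u) x := by
      have := (hFd (x * u)).comp x ((hasDerivAt_id x).mul_const u)
      rw [one_mul] at this
      exact this
    have h2 : HasDerivAt (fun s : ℝ => s ^ (-μ)) (-μ * x ^ (-μ - 1)) x := by
      have := Real.hasDerivAt_rpow_const (x := x) (p := -μ) (Or.inl hx)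
      simpa [mul_comm] using this
    exact h1.mul h2
  have hmono : MonotoneOn G (Set.Ici (1:ℝ)) := by
    apply monotoneOn_of_deriv_nonneg (convex_Ici 1)
    · intro x hx
      have hx0 : x ≠ 0 := ne_of_gt (lt_of_lt_of_le one_pos hx)
      exact ((hGd x hx0).continuousAt).continuousWithinAt
    · intro x hx
      rw [interior_Ici] at hx
      exact ((hGd x (ne_of_gt (lt_trans one_pos hx))).differentiableAt).differentiableWithinAt
    · intro x hx
      rw [interior_Ici] at hx
      have hx1 : (1:ℝ) < x := hx
      have hx0 : (0:ℝ) < x := lt_trans one_pos hx1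
      rw [(hGd x (ne_of_gt hx0)).deriv]
      have hxu : x * u ≠ 0 := mul_ne_zero (ne_of_gt hx0) hu
      obtain ⟨hpos, hle⟩ := hf3 (x * u) hxu
      have key : f (x * u) * u * x ^ (-μ) + primitive f (x * u) * (-μ * x ^ (-μ - 1))
          = x ^ (-μ - 1) * (x * u * f (x * u) - μ * primitive f (x * u)) := by
        have hxμ : x ^ (-μ) = x * x ^ (-μ - 1) := by
          rw [← Real.rpow_one_add' (le_of_lt hx0)]
          · ring_nf
          · intro h; linarith
        rw [hxμ]; ring
      rw [key]
      have hpow : (0:ℝ) ≤ x ^ (-μ - 1) := Real.rpow_nonneg (le_of_lt hx0) _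
      have : 0 ≤ x * u * f (x * u) - μ * primitive f (x * u) := by linarith
      positivity
  have h1 : G 1 ≤ G t := hmono (Set.self_mem_Ici) ht ht
  have hG1 : G 1 = primitive f u := by simp [hG]
  have hGt : G t = primitive f (t * u) * (t ^ μ)⁻¹ := by
    simp [hG, Real.rpow_neg (le_of_lt ht0)]
  rw [hG1, hGt] at h1
  have htμ : (0:ℝ) < t ^ μ := Real.rpow_pos_of_pos ht0 μ
  calc t ^ μ * primitive f u ≤ t ^ μ * (primitive f (t * u) * (t ^ μ)⁻¹) :=
        mul_le_mul_of_nonneg_left h1 (le_of_lt htμ)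
    _ = primitive f (t * u) := by field_simp
end
end

section
/- Let f : ℝ → ℝ be continuous and satisfy (f3) with constant μ > 2, and let e : ℝ³ → ℝ be a continuous compactly supported function. For t > 0 define e_t(x) = t^{1/2} · e(x/t). Then for every t ≥ 1: ∫_{ℝ³} F(e_t(x)) dx = t³ ∫_{ℝ³} F(t^{1/2} e(x)) dx ≥ t^{(μ+6)/2} ∫_{ℝ³} F(e(x)) dx, where F(u) = ∫₀^u f(s) ds. -/
open MeasureTheory Filter Topology

noncomputable section

lemma primitive_hasDerivAt {f : ℝ → ℝ} (hf : Continuous f) (u : ℝ) :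
    HasDerivAt (primitive f) (f u) u :=
  (intervalIntegral.integral_hasStrictDerivAt_right (hf.intervalIntegrable _ _)
    (hf.stronglyMeasurableAtFilter _ _) hf.continuousAt).hasDerivAt

lemma primitive_continuous {f : ℝ → ℝ} (hf : Continuous f) :
    Continuous (primitive f) := by
  have : ∀ u, ContinuousAt (primitive f) u :=
    fun u => (primitive_hasDerivAt hf u).continuousAt
  exact continuous_iff_continuousAt.2 this

lemma primitive_zero (f : ℝ → ℝ) : primitive f 0 = 0 := by
  simp [primitive]

lemma primitive_nonneg {μ : ℝ} {f : ℝ → ℝ} (hμ : 2 < μ)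
    (hf3 : ∀ u : ℝ, u ≠ 0 → 0 < μ * primitive f u ∧ μ * primitive f u ≤ u * f u)
    (u : ℝ) : 0 ≤ primitive f u := by
  rcases eq_or_ne u 0 with h | h
  · simp [h, primitive_zero]
  · have := (hf3 u h).1
    nlinarith

/-- Key scaling lemma: for `c ≥ 1`, `c^μ * F(u) ≤ F(c*u)`. -/
lemma primitive_scale {μ : ℝ} {f : ℝ → ℝ} (hf : Continuous f) (hμ : 2 < μ)
    (hf3 : ∀ u : ℝ, u ≠ 0 → 0 < μ * primitive f u ∧ μ * primitive f u ≤ u * f u)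
    (u : ℝ) {c : ℝ} (hc : 1 ≤ c) :
    c ^ μ * primitive f u ≤ primitive f (c * u) := by
  rcases eq_or_ne u 0 with h | h
  · simp [h, primitive_zero]
  set g : ℝ → ℝ := fun s => primitive f (s * u) * s ^ (-μ) with hg
  have hderiv : ∀ s ∈ Set.Ioi (0:ℝ), HasDerivAt g
      (f (s * u) * u * s ^ (-μ) + primitive f (s * u) * (-μ * s ^ (-μ - 1))) s := by
    intro s hs
    have hs' : (0:ℝ) < s := hs
    have h1 : HasDerivAt (fun s : ℝ => primitive f (s * u)) (f (s * u) * u) s :=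
      by have := (primitive_hasDerivAt hf (s * u)).comp s (hasDerivAt_mul_const u); exact this
    have h2 : HasDerivAt (fun s : ℝ => s ^ (-μ)) (-μ * s ^ (-μ - 1)) s := by
      simpa using Real.hasDerivAt_rpow_const (p := -μ) (Or.inl hs'.ne')
    exact h1.mul h2
  have hmono : MonotoneOn g (Set.Ici (1:ℝ)) := by
    apply monotoneOn_of_deriv_nonneg (convex_Ici 1) ?_ ?_ ?_
    · apply ContinuousOn.mul
      · exact ((primitive_continuous hf).comp (continuous_id.mul continuous_const)).continuousOn
      · intro s hs
        exact (Real.continuousAt_rpow_const s (-μ)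
          (Or.inl (by exact ne_of_gt (lt_of_lt_of_le one_pos hs)))).continuousWithinAt
    · intro s hs
      rw [interior_Ici] at hs
      exact (hderiv s (show (0:ℝ) < s from lt_trans one_pos hs)).differentiableAt.differentiableWithinAt
    · intro s hs
      rw [interior_Ici] at hs
      have hs1 : (1:ℝ) < s := hs
      have hs0 : (0:ℝ) < s := lt_trans one_pos hs1
      rw [(hderiv s hs0).deriv]
      have hsu : s * u ≠ 0 := mul_ne_zero hs0.ne' h
      have key := (hf3 (s * u) hsu).2
      have hpow : s ^ (-μ) = s * s ^ (-μ - 1) := by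
        rw [← Real.rpow_one_add' hs0.le (by nlinarith)]
        ring_nf
      rw [hpow]
      have hp : (0:ℝ) < s ^ (-μ - 1) := Real.rpow_pos_of_pos hs0 _
      nlinarith
  have h1 : g 1 ≤ g c := hmono (by simp) (by simpa using hc) hc
  have hc0 : (0:ℝ) < c := lt_of_lt_of_le one_pos hc
  have hg1 : g 1 = primitive f u := by simp [hg]
  have hgc : g c = primitive f (c * u) * c ^ (-μ) := rfl
  rw [hg1, hgc] at h1
  have hcp : (0:ℝ) < c ^ μ := Real.rpow_pos_of_pos hc0 _
  have := mul_le_mul_of_nonneg_left h1 hcp.le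
  calc c ^ μ * primitive f u ≤ c ^ μ * (primitive f (c * u) * c ^ (-μ)) := this
    _ = primitive f (c * u) := by
        rw [← mul_assoc, mul_comm (c ^ μ), mul_assoc, ← Real.rpow_add hc0]
        simp

/-- **Estimate (3.3).** For `f` satisfying (f3) with `μ > 2`, and `e` continuous with
compact support, the rescaling `e_t(x) = t^{1/2} e(x/t)` satisfies, for `t ≥ 1`,
`∫ F(e_t) = t³ ∫ F(t^{1/2} e) ≥ t^{(μ+6)/2} ∫ F(e)`. -/
theorem primitive_rescaling_estimate
    (μ : ℝ) (f : ℝ → ℝ) (hf : Continuous f) (hμ : 2 < μ)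
    (hf3 : ∀ u : ℝ, u ≠ 0 → 0 < μ * primitive f u ∧ μ * primitive f u ≤ u * f u)
    (e : R3 → ℝ) (he : Continuous e) (hec : HasCompactSupport e) :
    ∀ t : ℝ, 1 ≤ t →
      (∫ x : R3, primitive f (t ^ ((1:ℝ)/2) * e (t⁻¹ • x))) =
        t ^ (3:ℕ) * (∫ x : R3, primitive f (t ^ ((1:ℝ)/2) * e x)) ∧
      t ^ ((μ + 6) / 2) * (∫ x : R3, primitive f (e x)) ≤
        ∫ x : R3, primitive f (t ^ ((1:ℝ)/2) * e (t⁻¹ • x)) := by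
  intro t ht
  have ht0 : (0:ℝ) < t := lt_of_lt_of_le one_pos ht
  set c : ℝ := t ^ ((1:ℝ)/2) with hcdef
  have hc1 : (1:ℝ) ≤ c := Real.one_le_rpow ht (by norm_num)
  -- Part 1 : change of variables
  have hfinrank : Module.finrank ℝ R3 = 3 := by
    simp [R3, finrank_euclideanSpace]
  have part1 : (∫ x : R3, primitive f (c * e (t⁻¹ • x))) =
      t ^ (3:ℕ) * (∫ x : R3, primitive f (c * e x)) := by
    have := MeasureTheory.Measure.integral_comp_inv_smul_of_nonneg (μ := (volume : Measure R3))
      (fun x : R3 => primitive f (c * e x)) (R := t) ht0.le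
    rw [hfinrank] at this
    simpa [smul_eq_mul] using this
  refine ⟨part1, ?_⟩
  -- integrability
  have hFcont := primitive_continuous hf
  have int1 : Integrable (fun x : R3 => primitive f (e x)) := by
    apply Continuous.integrable_of_hasCompactSupport (hFcont.comp he)
    exact hec.comp_left (primitive_zero f)
  have int2 : Integrable (fun x : R3 => primitive f (c * e x)) := by
    apply Continuous.integrable_of_hasCompactSupport
      (hFcont.comp (continuous_const.mul he))
    exact (hec.comp_left (g := fun u => primitive f (c * u)) (by simp [primitive_zero]))
  -- pointwise inequality
  have hpt : ∀ x : R3, c ^ μ * primitive f (e x) ≤ primitive f (c * e x) :=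
    fun x => primitive_scale hf hμ hf3 (e x) hc1
  have hint : c ^ μ * (∫ x : R3, primitive f (e x)) ≤ ∫ x : R3, primitive f (c * e x) := by
    rw [← integral_const_mul]
    exact integral_mono (int1.const_mul _) int2 hpt
  -- exponent arithmetic
  have hcμ : c ^ μ = t ^ (μ / 2) := by
    rw [hcdef, ← Real.rpow_mul ht0.le]
    ring_nf
  have h36 : t ^ ((μ + 6) / 2) = t ^ (μ / 2) * t ^ (3:ℕ) := by
    rw [← Real.rpow_natCast t 3, ← Real.rpow_add ht0]
    ring_nf
  calc t ^ ((μ + 6) / 2) * (∫ x : R3, primitive f (e x))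
      = t ^ (3:ℕ) * (c ^ μ * (∫ x : R3, primitive f (e x))) := by rw [hcμ, h36]; ring
    _ ≤ t ^ (3:ℕ) * (∫ x : R3, primitive f (c * e x)) := by
        exact mul_le_mul_of_nonneg_left hint (by positivity)
    _ = ∫ x : R3, primitive f (c * e (t⁻¹ • x)) := part1.symm
end
end

section
/- Let a, b > 0, p ∈ (2,6), r ∈ (max{p,4}, 6), let f : ℝ → ℝ be continuous with lim_{u→0} f(u)/u = 0 and limsup_{|u|→∞} |f(u)|/|u|^{p−1} < ∞, let V : ℝ³ → ℝ be measurable with V₀ ≤ V(x) ≤ V₁ for some V₀, V₁ > 0, and let W(x) = 1 + |x|^α with α ∈ (0,1). Then there exist ρ, δ > 0 such that for every λ ∈ (0,1] and every u ∈ C_c^∞(ℝ³) with ∫_{ℝ³}(|∇u|² + V(x)u² + λW(x)u²) = ρ², one has I_λ(u) ≥ δ. -/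
open MeasureTheory Filter Topology
open scoped NNReal ENNReal

noncomputable section

/-- The perturbed energy functional
`I_λ(u) = (1/2)∫(a|∇u|² + Vu² + λWu²) + (b/4)(∫|∇u|²)² − ∫F(u) − (λ/r)∫|u|^r`
evaluated on (smooth) functions, with `∇u` the (Fréchet) derivative. -/
def IlamSmooth (a b lam r : ℝ) (V W : R3 → ℝ) (f : ℝ → ℝ) (u : R3 → ℝ) : ℝ :=
  (1/2) * (∫ x : R3, (a * ‖fderiv ℝ u x‖ ^ 2 + (V x + lam * W x) * (u x) ^ 2))
    + (b/4) * (∫ x : R3, ‖fderiv ℝ u x‖ ^ 2) ^ 2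
    - (∫ x : R3, primitive f (u x)) - (lam / r) * ∫ x : R3, |u x| ^ r

namespace MPGaux


lemma f_zero {f : ℝ → ℝ} (hf : Continuous f)
    (hf1 : Tendsto (fun u => f u / u) (𝓝[≠] (0:ℝ)) (𝓝 0)) : f 0 = 0 := by
  have h2 : Tendsto (fun u : ℝ => (f u / u) * u) (𝓝[≠] (0:ℝ)) (𝓝 (0 * 0)) :=
    hf1.mul (tendsto_id.mono_left nhdsWithin_le_nhds)
  rw [mul_zero] at h2
  have hEq : (fun u : ℝ => (f u / u) * u) =ᶠ[𝓝[≠] (0:ℝ)] f := by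
    filter_upwards [self_mem_nhdsWithin] with x hx
    exact div_mul_cancel₀ _ hx
  have h1 : Tendsto f (𝓝[≠] (0:ℝ)) (𝓝 0) := Tendsto.congr' hEq h2
  have h3 : Tendsto f (𝓝[≠] (0:ℝ)) (𝓝 (f 0)) :=
    (hf.tendsto 0).mono_left nhdsWithin_le_nhds
  exact tendsto_nhds_unique h3 h1

lemma f_growth {p : ℝ} (hp6 : p < 6) {f : ℝ → ℝ} (hf : Continuous f)
    (hf1 : Tendsto (fun u => f u / u) (𝓝[≠] (0:ℝ)) (𝓝 0))
    (hf2 : ∃ C : ℝ, ∀ᶠ u : ℝ in comap (fun u : ℝ => |u|) atTop,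
      |f u| ≤ C * |u| ^ (p - 1))
    {ε : ℝ} (hε : 0 < ε) :
    ∃ C : ℝ, 0 ≤ C ∧ ∀ s : ℝ, |f s| ≤ ε * |s| + C * |s| ^ (5:ℕ) := by
  obtain ⟨C₀, hC₀⟩ := hf2
  rw [eventually_comap, eventually_atTop] at hC₀
  obtain ⟨M, hM⟩ := hC₀
  -- small range
  have hsm : ∀ᶠ s in 𝓝[≠] (0:ℝ), dist (f s / s) 0 < ε :=
    Metric.tendsto_nhds.mp hf1 ε hε
  rw [eventually_nhdsWithin_iff] at hsm
  obtain ⟨δ, hδ0, hδ⟩ := Metric.eventually_nhds_iff.mp hsm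
  -- middle range
  obtain ⟨K, hK⟩ := (isCompact_Icc (a := -(max M 1)) (b := max M 1)).exists_bound_of_continuousOn
    hf.continuousOn
  have hM1 : (0:ℝ) ≤ max M 1 := le_trans zero_le_one (le_max_right M 1)
  have hK0 : 0 ≤ K := le_trans (norm_nonneg (f 0)) (hK 0 ⟨by linarith, hM1⟩)
  refine ⟨max (K / δ^5) (max C₀ 0), le_trans (le_max_right C₀ 0) (le_max_right _ _), ?_⟩
  set C := max (K / δ^5) (max C₀ 0) with hC_def
  have hC0 : 0 ≤ C := le_trans (le_max_right C₀ 0) (le_max_right _ _)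
  intro s
  rcases eq_or_ne s 0 with rfl | hs
  · rw [f_zero hf hf1]; simp
  by_cases h1 : |s| < δ
  · have h2 := hδ (show dist s 0 < δ by rwa [Real.dist_eq, sub_zero]) (by simpa using hs)
    rw [Real.dist_eq, sub_zero, abs_div] at h2
    have h3 : |f s| ≤ ε * |s| := le_of_lt ((div_lt_iff₀ (abs_pos.2 hs)).mp h2)
    have h4 : 0 ≤ C * |s|^(5:ℕ) := mul_nonneg hC0 (by positivity)
    linarith
  push_neg at h1
  by_cases h2 : |s| ≤ max M 1
  · have hmem : s ∈ Set.Icc (-(max M 1)) (max M 1) := by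
      obtain ⟨ha, hb⟩ := abs_le.mp h2; exact ⟨ha, hb⟩
    have hfs : |f s| ≤ K := by simpa [Real.norm_eq_abs] using hK s hmem
    have h5 : δ^5 ≤ |s|^5 := pow_le_pow_left₀ hδ0.le h1 5
    have h6 : K = (K/δ^5) * δ^5 := by field_simp
    have h7 : (K/δ^5) * δ^5 ≤ (K/δ^5) * |s|^5 :=
      mul_le_mul_of_nonneg_left h5 (div_nonneg hK0 (by positivity))
    have h8 : (K/δ^5) * |s|^5 ≤ C * |s|^5 :=
      mul_le_mul_of_nonneg_right (le_max_left _ _) (by positivity)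
    have h9 : 0 ≤ ε * |s| := mul_nonneg hε.le (abs_nonneg s)
    linarith
  · push_neg at h2
    have hs1 : (1:ℝ) ≤ |s| := le_of_lt (lt_of_le_of_lt (le_max_right M 1) h2)
    have h3 : |f s| ≤ C₀ * |s| ^ (p-1) :=
      hM |s| (le_of_lt (lt_of_le_of_lt (le_max_left M 1) h2)) s rfl
    have h4 : |s| ^ (p-1) ≤ |s| ^ (5:ℝ) :=
      Real.rpow_le_rpow_of_exponent_le hs1 (by linarith)
    have h5 : |s| ^ (5:ℝ) = |s| ^ (5:ℕ) := by
      rw [show (5:ℝ) = ((5:ℕ):ℝ) by norm_num, Real.rpow_natCast]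
    have h6 : C₀ * |s| ^ (p-1) ≤ C * |s| ^ (p-1) :=
      mul_le_mul_of_nonneg_right
        (le_trans (le_max_left C₀ 0) (le_max_right _ _))
        (Real.rpow_nonneg (abs_nonneg s) _)
    have h7 : C * |s| ^ (p-1) ≤ C * |s| ^ (5:ℝ) := mul_le_mul_of_nonneg_left h4 hC0
    have h9 : 0 ≤ ε * |s| := mul_nonneg hε.le (abs_nonneg s)
    rw [h5] at h7
    linarith

lemma F_bound {f : ℝ → ℝ} {ε C : ℝ} (hε : 0 ≤ ε) (hC : 0 ≤ C)
    (hb : ∀ s : ℝ, |f s| ≤ ε * |s| + C * |s| ^ (5:ℕ)) (s : ℝ) :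
    |primitive f s| ≤ ε * s^2 + C * s^(6:ℕ) := by
  have key : ∀ t ∈ Set.uIoc (0:ℝ) s, ‖f t‖ ≤ ε * |s| + C * |s|^5 := by
    intro t ht
    have hts : |t| ≤ |s| := by
      rcases Set.mem_uIoc.mp ht with ⟨h1, h2⟩ | ⟨h1, h2⟩ <;>
        rw [abs_le] <;> constructor <;>
        nlinarith [le_abs_self s, neg_abs_le s, abs_nonneg s]
    rw [Real.norm_eq_abs]
    calc |f t| ≤ ε * |t| + C * |t|^5 := hb t
      _ ≤ ε * |s| + C * |s|^5 :=
        add_le_add (mul_le_mul_of_nonneg_left hts hε)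
          (mul_le_mul_of_nonneg_left (pow_le_pow_left₀ (abs_nonneg t) hts 5) hC)
  have h2 := intervalIntegral.norm_integral_le_of_norm_le_const key
  rw [Real.norm_eq_abs] at h2
  have e1 : |s| ^ 2 = s ^ 2 := sq_abs s
  have e2 : |s| ^ 6 = s ^ 6 := by
    rw [← abs_pow]; exact abs_of_nonneg (by positivity)
  have h3 : (ε * |s| + C * |s|^5) * |s - 0| = ε * s^2 + C * s^6 := by
    rw [sub_zero, show (ε * |s| + C * |s|^5) * |s| = ε * |s|^2 + C * |s|^6 by ring, e1, e2]
  rw [h3] at h2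
  exact h2

lemma rpow_bound {r ε : ℝ} (hr4 : 4 < r) (hr6 : r < 6) (hε : 0 < ε) (hε1 : ε ≤ 1) (s : ℝ) :
    |s| ^ r ≤ ε * s^2 + ε^(r-6) * s^6 := by
  rcases eq_or_ne s 0 with rfl | hs
  · rw [abs_zero, Real.zero_rpow (by linarith : r ≠ 0)]
    simp
  have hp : 0 < |s| := abs_pos.2 hs
  have e2 : |s|^((2:ℕ):ℝ) = s^2 := by rw [Real.rpow_natCast]; exact sq_abs s
  have e6 : |s|^((6:ℕ):ℝ) = s^6 := by
    rw [Real.rpow_natCast, ← abs_pow]; exact abs_of_nonneg (by positivity)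
  rcases le_total |s| ε with h | h
  · have h1 : |s|^r = |s|^(r-2) * |s|^((2:ℕ):ℝ) := by
      rw [← Real.rpow_add hp]; norm_num
    have h2 : |s|^(r-2) ≤ |s|^(1:ℝ) :=
      Real.rpow_le_rpow_of_exponent_ge hp (h.trans hε1) (by linarith)
    rw [Real.rpow_one] at h2
    have h3 : (0:ℝ) ≤ ε^(r-6) * s^6 :=
      mul_nonneg (Real.rpow_nonneg hε.le _) (by positivity)
    have h4 : |s|^(r-2) * |s|^((2:ℕ):ℝ) ≤ ε * s^2 := by
      rw [e2]
      exact mul_le_mul_of_nonneg_right (h2.trans h) (by positivity)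
    linarith [h1 ▸ h4]
  · have h1 : |s|^r = |s|^(r-6) * |s|^((6:ℕ):ℝ) := by
      rw [← Real.rpow_add hp]; norm_num
    have h2 : |s|^(r-6) ≤ ε^(r-6) :=
      Real.rpow_le_rpow_of_nonpos hε h (by linarith)
    have h3 : (0:ℝ) ≤ ε * s^2 := mul_nonneg hε.le (by positivity)
    have h4 : |s|^(r-6) * |s|^((6:ℕ):ℝ) ≤ ε^(r-6) * s^6 := by
      rw [e6]
      exact mul_le_mul_of_nonneg_right h2 (by positivity)
    linarith [h1 ▸ h4]



def SobC : ℝ≥0 := eLpNormLESNormFDerivOfEqInnerConst (volume : Measure R3) 2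

lemma sobolev {u : R3 → ℝ} (hu : ContDiff ℝ 1 u) (h2u : HasCompactSupport u) :
    ∫ x : R3, (u x) ^ 6 ≤ ((SobC : ℝ))^6 * (∫ x : R3, ‖fderiv ℝ u x‖ ^ 2) ^ 3 := by
  have hfc : Continuous (fderiv ℝ u) := (contDiff_one_iff_fderiv (𝕜 := ℝ)).mp hu |>.2
  have hfs : HasCompactSupport (fderiv ℝ u) := h2u.fderiv (𝕜 := ℝ)
  have hn : 0 < Module.finrank ℝ R3 := by
    rw [finrank_euclideanSpace_fin]; norm_num
  have hp' : (((6:ℝ≥0)) : ℝ)⁻¹ = (((2:ℝ≥0)) : ℝ)⁻¹ - (Module.finrank ℝ R3 : ℝ)⁻¹ := by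
    rw [finrank_euclideanSpace_fin]; norm_num
  have key := eLpNorm_le_eLpNorm_fderiv_of_eq_inner (F' := ℝ) (volume : Measure R3)
    hu h2u (p := 2) (p' := 6) one_le_two hn hp'
  rw [eLpNorm_nnreal_eq_lintegral (by norm_num : (6:ℝ≥0) ≠ 0),
    eLpNorm_nnreal_eq_lintegral (by norm_num : (2:ℝ≥0) ≠ 0)] at key
  push_cast at key
  set A := ∫⁻ x : R3, (‖u x‖₊ : ℝ≥0∞) ^ (6:ℝ) with hA_def
  set B := ∫⁻ x : R3, (‖fderiv ℝ u x‖₊ : ℝ≥0∞) ^ (2:ℝ) with hB_def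
  have hAB : A ≤ ((SobC : ℝ≥0∞))^(6:ℝ) * B^(3:ℝ) := by
    calc A = (A ^ ((1:ℝ)/6)) ^ (6:ℝ) := by
          rw [← ENNReal.rpow_mul]; norm_num
      _ ≤ ((SobC : ℝ≥0∞) * B ^ ((1:ℝ)/2)) ^ (6:ℝ) :=
          ENNReal.rpow_le_rpow key (by norm_num)
      _ = ((SobC : ℝ≥0∞))^(6:ℝ) * B^(3:ℝ) := by
          rw [ENNReal.mul_rpow_of_nonneg _ _ (by norm_num), ← ENNReal.rpow_mul]
          norm_num
  -- convert to real integrals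
  have iB : Integrable (fun x : R3 => ‖fderiv ℝ u x‖ ^ 2) :=
    (show Continuous (fun x : R3 => ‖fderiv ℝ u x‖^2) from hfc.norm.pow 2).integrable_of_hasCompactSupport
      (hfs.comp_left (g := fun v : R3 →L[ℝ] ℝ => ‖v‖^2) (by simp))
  have iA : Integrable (fun x : R3 => (u x) ^ 6) :=
    (show Continuous (fun x : R3 => (u x)^6) from (hu.continuous.pow 6)).integrable_of_hasCompactSupport
      (h2u.comp_left (g := fun t : ℝ => t^6) (by simp))
  have hB : ENNReal.ofReal (∫ x : R3, ‖fderiv ℝ u x‖ ^ 2) = B := by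
    rw [ofReal_integral_eq_lintegral_ofReal iB (.of_forall fun x => by positivity), hB_def]
    apply lintegral_congr
    intro x
    rw [ENNReal.ofReal_pow (norm_nonneg _), ofReal_norm, enorm_eq_nnnorm,
      ← ENNReal.rpow_natCast]
    norm_num
  have hA : ENNReal.ofReal (∫ x : R3, (u x) ^ 6) = A := by
    rw [ofReal_integral_eq_lintegral_ofReal iA (.of_forall fun x => by positivity), hA_def]
    apply lintegral_congr
    intro x
    rw [show (u x)^6 = ‖u x‖^6 by rw [Real.norm_eq_abs, ← abs_pow]; exact (abs_of_nonneg (by positivity)).symm,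
      ENNReal.ofReal_pow (norm_nonneg _), ofReal_norm, enorm_eq_nnnorm, ← ENNReal.rpow_natCast]
    norm_num
  have hInn : (0:ℝ) ≤ ∫ x : R3, ‖fderiv ℝ u x‖ ^ 2 :=
    integral_nonneg fun x => by positivity
  have hRHS : ((SobC : ℝ≥0∞))^(6:ℝ) * B^(3:ℝ)
      = ENNReal.ofReal (((SobC : ℝ))^6 * (∫ x : R3, ‖fderiv ℝ u x‖ ^ 2) ^ 3) := by
    rw [← hB, ENNReal.ofReal_mul (by positivity), ENNReal.ofReal_pow (by positivity),
      ENNReal.ofReal_pow hInn, ENNReal.ofReal_coe_nnreal,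
      ← ENNReal.rpow_natCast ((SobC : ℝ≥0∞)) 6, ← ENNReal.rpow_natCast (ENNReal.ofReal _) 3]
    norm_num
  rw [hRHS, ← hA] at hAB
  exact (ENNReal.ofReal_le_ofReal_iff (by positivity)).mp hAB


end MPGaux

set_option maxHeartbeats 2000000 in
/-- **Lemma 3.2 (1) (uniform mountain-pass geometry).** There exist `ρ, δ > 0` such
that for every `λ ∈ (0,1]`, `I_λ(u) ≥ δ` for every test function `u` with
`‖u‖_{E_λ}² = ∫(|∇u|² + Vu² + λWu²) = ρ²`. -/
theorem mountain_pass_geometry_sphere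
    (a b p r α V₀ V₁ : ℝ) (f : ℝ → ℝ) (V : R3 → ℝ)
    (ha : 0 < a) (hb : 0 < b) (hp2 : 2 < p) (hp6 : p < 6)
    (hr : max p 4 < r) (hr6 : r < 6)
    (hf : Continuous f)
    (hf1 : Tendsto (fun u => f u / u) (𝓝[≠] (0:ℝ)) (𝓝 0))
    (hf2 : ∃ C : ℝ, ∀ᶠ u : ℝ in comap (fun u : ℝ => |u|) atTop,
      |f u| ≤ C * |u| ^ (p - 1))
    (hVm : Measurable V) (hV0 : 0 < V₀) (hV1 : 0 < V₁)
    (hVbd : ∀ x : R3, V₀ ≤ V x ∧ V x ≤ V₁)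
    (hα0 : 0 < α) (hα1 : α < 1) :
    ∃ ρ : ℝ, 0 < ρ ∧ ∃ δ : ℝ, 0 < δ ∧
      ∀ lam : ℝ, lam ∈ Set.Ioc (0:ℝ) 1 →
        ∀ u : R3 → ℝ, IsTestFun u →
          (∫ x : R3, (‖fderiv ℝ u x‖ ^ 2 + V x * (u x) ^ 2
              + lam * (1 + ‖x‖ ^ α) * (u x) ^ 2)) = ρ ^ 2 →
          δ ≤ IlamSmooth a b lam r V (fun x : R3 => 1 + ‖x‖ ^ α) f u := by
  have hr4 : (4:ℝ) < r := (le_max_right p 4).trans_lt hr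
  have hrpos : (0:ℝ) < r := by linarith
  set m := min a 1 with hm_def
  have hm : 0 < m := lt_min ha one_pos
  set ε := min 1 (m * V₀ / 16) with hε_def
  have hε : 0 < ε := lt_min one_pos (by positivity)
  have hε1 : ε ≤ 1 := min_le_left _ _
  have hε2 : ε ≤ m * V₀ / 16 := min_le_right _ _
  obtain ⟨C, hC0, hCf⟩ := MPGaux.f_growth hp6 hf hf1 hf2 hε
  set S := ((MPGaux.SobC : ℝ))^6 with hS_def
  have hS : 0 ≤ S := by positivity
  set K := (C + ε^(r-6)) * S with hK_def
  have hK0 : 0 ≤ K := mul_nonneg (add_nonneg hC0 (Real.rpow_nonneg hε.le _)) hS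
  set ρ := min 1 ((m/(8*(K+1))) ^ ((1:ℝ)/4)) with hρ_def
  have hρ0 : 0 < ρ := lt_min one_pos (Real.rpow_pos_of_pos (by positivity) _)
  have hρ4 : ρ^4 ≤ m/(8*(K+1)) := by
    have h := min_le_right 1 ((m/(8*(K+1))) ^ ((1:ℝ)/4))
    calc ρ^4 ≤ ((m/(8*(K+1))) ^ ((1:ℝ)/4))^4 := pow_le_pow_left₀ hρ0.le h 4
      _ = m/(8*(K+1)) := by
        rw [← Real.rpow_natCast ((m/(8*(K+1))) ^ ((1:ℝ)/4)) 4,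
          ← Real.rpow_mul (by positivity)]
        norm_num
  refine ⟨ρ, hρ0, (m/4) * ρ^2, by positivity, ?_⟩
  intro lam hlam u hu hnorm
  obtain ⟨hlam0, hlam1⟩ := hlam
  obtain ⟨husm, husupp⟩ := hu
  have huc : Continuous u := husm.continuous
  have hu1 : ContDiff ℝ 1 u := husm.of_le (by simp)
  have hfc : Continuous (fderiv ℝ u) := (contDiff_one_iff_fderiv (𝕜 := ℝ)).mp hu1 |>.2
  have hWnn : ∀ x : R3, (0:ℝ) ≤ 1 + ‖x‖ ^ α := fun x => by
    have := Real.rpow_nonneg (norm_nonneg x) α; linarith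
  have hWc : Continuous (fun x : R3 => 1 + ‖x‖ ^ α) :=
    continuous_const.add (continuous_norm.rpow_const (fun x => Or.inr hα0.le))
  have hVpos : ∀ x : R3, 0 < V x := fun x => lt_of_lt_of_le hV0 (hVbd x).1
  -- integrability facts
  have i1 : Integrable (fun x : R3 => ‖fderiv ℝ u x‖^2) :=
    (show Continuous (fun x : R3 => ‖fderiv ℝ u x‖^2) from hfc.norm.pow 2).integrable_of_hasCompactSupport
      ((husupp.fderiv (𝕜 := ℝ)).comp_left (g := fun v : R3 →L[ℝ] ℝ => ‖v‖^2) (by simp))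
  have i2 : Integrable (fun x : R3 => (u x)^2) :=
    (show Continuous (fun x : R3 => (u x)^2) from huc.pow 2).integrable_of_hasCompactSupport
      (husupp.comp_left (g := fun t : ℝ => t^2) (by norm_num))
  have i3 : Integrable (fun x : R3 => (u x)^6) :=
    (show Continuous (fun x : R3 => (u x)^6) from huc.pow 6).integrable_of_hasCompactSupport
      (husupp.comp_left (g := fun t : ℝ => t^6) (by norm_num))
  have hrabs : Continuous (fun t : ℝ => |t| ^ r) :=
    continuous_abs.rpow_const (fun t => Or.inr hrpos.le)
  have i4 : Integrable (fun x : R3 => |u x| ^ r) :=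
    (hrabs.comp huc).integrable_of_hasCompactSupport
      (husupp.comp_left (g := fun t : ℝ => |t| ^ r) (by simp [Real.zero_rpow hrpos.ne']))
  have i5 : Integrable (fun x : R3 => V x * (u x)^2) := by
    refine Integrable.bdd_mul (c := V₁) i2 hVm.aestronglyMeasurable (.of_forall fun x => ?_)
    rw [Real.norm_eq_abs, abs_of_pos (hVpos x)]; exact (hVbd x).2
  have i6 : Integrable (fun x : R3 => lam * (1 + ‖x‖ ^ α) * (u x)^2) :=
    (show Continuous (fun x : R3 => lam * (1 + ‖x‖ ^ α) * (u x)^2) from (continuous_const.mul hWc).mul (huc.pow 2)).integrable_of_hasCompactSupport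
      (HasCompactSupport.mul_left (husupp.comp_left (g := fun t : ℝ => t^2) (by norm_num)))
  have hFcont : Continuous (primitive f) :=
    intervalIntegral.continuous_primitive (fun a b => hf.intervalIntegrable a b) 0
  have iF : Integrable (fun x : R3 => primitive f (u x)) :=
    (hFcont.comp huc).integrable_of_hasCompactSupport
      (husupp.comp_left (g := primitive f) (by simp [primitive]))
  -- splitting the sphere condition
  have hsplit : (∫ x : R3, ‖fderiv ℝ u x‖^2) + (∫ x : R3, V x * (u x)^2)
      + (∫ x : R3, lam * (1 + ‖x‖ ^ α) * (u x)^2) = ρ^2 := by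
    have hadd1 : Integrable (fun x : R3 => ‖fderiv ℝ u x‖^2 + V x * (u x)^2) := i1.add i5
    have e1 : (∫ x : R3, (‖fderiv ℝ u x‖ ^ 2 + V x * (u x) ^ 2
          + lam * (1 + ‖x‖ ^ α) * (u x) ^ 2))
        = (∫ x : R3, (‖fderiv ℝ u x‖^2 + V x * (u x)^2))
          + ∫ x : R3, lam * (1 + ‖x‖ ^ α) * (u x)^2 := integral_add hadd1 i6
    have e2 : (∫ x : R3, (‖fderiv ℝ u x‖^2 + V x * (u x)^2))
        = (∫ x : R3, ‖fderiv ℝ u x‖^2) + ∫ x : R3, V x * (u x)^2 := integral_add i1 i5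
    linarith [e1, e2, hnorm]
  have hE1nn : 0 ≤ ∫ x : R3, ‖fderiv ℝ u x‖^2 := integral_nonneg fun x => by positivity
  have hE2nn : 0 ≤ ∫ x : R3, V x * (u x)^2 :=
    integral_nonneg fun x => mul_nonneg (hVpos x).le (sq_nonneg _)
  have hE3nn : 0 ≤ ∫ x : R3, lam * (1 + ‖x‖ ^ α) * (u x)^2 :=
    integral_nonneg fun x => mul_nonneg (mul_nonneg hlam0.le (hWnn x)) (sq_nonneg _)
  have hE1ρ : (∫ x : R3, ‖fderiv ℝ u x‖^2) ≤ ρ^2 := by linarith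
  have hE2ρ : (∫ x : R3, V x * (u x)^2) ≤ ρ^2 := by linarith
  have hu2ρ : (∫ x : R3, (u x)^2) ≤ ρ^2 / V₀ := by
    have h1 : V₀ * ∫ x : R3, (u x)^2 ≤ ∫ x : R3, V x * (u x)^2 := by
      rw [← integral_const_mul]
      exact integral_mono (i2.const_mul V₀) i5
        (fun x => mul_le_mul_of_nonneg_right (hVbd x).1 (sq_nonneg _))
    rw [le_div_iff₀ hV0]
    nlinarith
  have hu6ρ : (∫ x : R3, (u x)^6) ≤ S * (ρ^2)^3 := by
    calc (∫ x : R3, (u x)^6) ≤ S * (∫ x : R3, ‖fderiv ℝ u x‖^2)^3 :=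
          MPGaux.sobolev hu1 husupp
      _ ≤ S * (ρ^2)^3 := mul_le_mul_of_nonneg_left (pow_le_pow_left₀ hE1nn hE1ρ 3) hS
  -- first term lower bound
  have iT1 : Integrable (fun x : R3 =>
      a * ‖fderiv ℝ u x‖^2 + (V x + lam * (1 + ‖x‖ ^ α)) * (u x)^2) := by
    have heq : (fun x : R3 =>
        a * ‖fderiv ℝ u x‖^2 + (V x + lam * (1 + ‖x‖ ^ α)) * (u x)^2)
        = fun x : R3 =>
        a * ‖fderiv ℝ u x‖^2 + (V x * (u x)^2 + lam * (1 + ‖x‖ ^ α) * (u x)^2) := by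
      funext x; ring
    rw [heq]
    exact (i1.const_mul a).add (i5.add i6)
  have hT1 : m * ρ^2 ≤ ∫ x : R3,
      (a * ‖fderiv ℝ u x‖^2 + (V x + lam * (1 + ‖x‖ ^ α)) * (u x)^2) := by
    have hma : m ≤ a := min_le_left a 1
    have hm1 : m ≤ 1 := min_le_right a 1
    have hptw : ∀ x : R3,
        m * (‖fderiv ℝ u x‖^2 + V x * (u x)^2 + lam * (1 + ‖x‖ ^ α) * (u x)^2)
        ≤ a * ‖fderiv ℝ u x‖^2 + (V x + lam * (1 + ‖x‖ ^ α)) * (u x)^2 := by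
      intro x
      have h1 : (0:ℝ) ≤ ‖fderiv ℝ u x‖^2 := by positivity
      have h2 : (0:ℝ) ≤ V x * (u x)^2 := mul_nonneg (hVpos x).le (sq_nonneg _)
      have h3 : (0:ℝ) ≤ lam * (1 + ‖x‖ ^ α) * (u x)^2 :=
        mul_nonneg (mul_nonneg hlam0.le (hWnn x)) (sq_nonneg _)
      nlinarith
    calc m * ρ^2 = ∫ x : R3,
          m * (‖fderiv ℝ u x‖^2 + V x * (u x)^2 + lam * (1 + ‖x‖ ^ α) * (u x)^2) := by
          rw [integral_const_mul, hnorm]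
      _ ≤ _ := integral_mono (((i1.add i5).add i6).const_mul m) iT1 hptw
  -- nonlinear terms upper bounds
  have hFle : (∫ x : R3, primitive f (u x)) ≤ ε * (ρ^2/V₀) + C * (S * (ρ^2)^3) := by
    have h1 : (∫ x : R3, primitive f (u x))
        ≤ ∫ x : R3, (ε * (u x)^2 + C * (u x)^6) := by
      refine integral_mono iF ((i2.const_mul ε).add (i3.const_mul C)) fun x => ?_
      exact le_trans (le_abs_self _) (MPGaux.F_bound hε.le hC0 hCf (u x))
    rw [integral_add (i2.const_mul ε) (i3.const_mul C),
      integral_const_mul, integral_const_mul] at h1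
    have h2 : ε * ∫ x : R3, (u x)^2 ≤ ε * (ρ^2/V₀) := mul_le_mul_of_nonneg_left hu2ρ hε.le
    have h3 : C * ∫ x : R3, (u x)^6 ≤ C * (S * (ρ^2)^3) := mul_le_mul_of_nonneg_left hu6ρ hC0
    linarith
  have hrle : lam / r * ∫ x : R3, |u x| ^ r
      ≤ ε * (ρ^2/V₀) + ε^(r-6) * (S * (ρ^2)^3) := by
    have hint_nn : 0 ≤ ∫ x : R3, |u x| ^ r :=
      integral_nonneg fun x => Real.rpow_nonneg (abs_nonneg _) r
    have h0 : lam / r * ∫ x : R3, |u x| ^ r ≤ ∫ x : R3, |u x| ^ r := by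
      have hle1 : lam / r ≤ 1 := by rw [div_le_one hrpos]; linarith
      nlinarith
    have h1 : (∫ x : R3, |u x| ^ r)
        ≤ ∫ x : R3, (ε * (u x)^2 + ε^(r-6) * (u x)^6) := by
      refine integral_mono i4 ((i2.const_mul ε).add (i3.const_mul (ε^(r-6)))) fun x => ?_
      exact MPGaux.rpow_bound hr4 hr6 hε hε1 (u x)
    rw [integral_add (i2.const_mul ε) (i3.const_mul _),
      integral_const_mul, integral_const_mul] at h1
    have h2 : ε * ∫ x : R3, (u x)^2 ≤ ε * (ρ^2/V₀) := mul_le_mul_of_nonneg_left hu2ρ hε.le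
    have h3 : ε^(r-6) * ∫ x : R3, (u x)^6 ≤ ε^(r-6) * (S * (ρ^2)^3) :=
      mul_le_mul_of_nonneg_left hu6ρ (Real.rpow_nonneg hε.le _)
    linarith
  -- final arithmetic
  have hKρ : K * ρ^6 ≤ (m/8) * ρ^2 := by
    have h1 : K * ρ^4 ≤ m/8 := by
      have h2 : K * ρ^4 ≤ K * (m/(8*(K+1))) := mul_le_mul_of_nonneg_left hρ4 hK0
      have h3 : K * (m/(8*(K+1))) ≤ m/8 := by
        rw [show K * (m/(8*(K+1))) = (K*m)/(8*(K+1)) by ring,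
          div_le_div_iff₀ (by positivity) (by norm_num : (0:ℝ) < 8)]
        nlinarith
      linarith
    calc K * ρ^6 = (K * ρ^4) * ρ^2 := by ring
      _ ≤ (m/8) * ρ^2 := mul_le_mul_of_nonneg_right h1 (sq_nonneg ρ)
  have hερ : 2 * (ε * (ρ^2/V₀)) ≤ (m/8) * ρ^2 := by
    rw [show 2 * (ε * (ρ^2/V₀)) = (2*ε/V₀) * ρ^2 by ring]
    refine mul_le_mul_of_nonneg_right ?_ (sq_nonneg ρ)
    rw [div_le_div_iff₀ hV0 (by norm_num : (0:ℝ) < 8)]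
    nlinarith
  have hb4 : (0:ℝ) ≤ (b/4) * (∫ x : R3, ‖fderiv ℝ u x‖^2)^2 := by positivity
  have hKexp : C * (S*(ρ^2)^3) + ε^(r-6) * (S*(ρ^2)^3) = K * ρ^6 := by
    rw [hK_def]; ring
  simp only [IlamSmooth]
  linarith
end
end

section
/- Let a, b > 0, μ ∈ (2, r), λ ≥ 0 and C > 0. Let f : ℝ → ℝ be continuous with u·f(u) ≥ μ·F(u) > 0 for u ≠ 0 (F(u) = ∫₀^u f(s) ds), and let V, W ∈ C¹(ℝ³, ℝ) satisfy pointwise 0 ≤ x·∇V(x) ≤ ((μ−2)/μ)V(x) and 0 ≤ x·∇W(x) ≤ ((μ−2)/μ)W(x). Let u : ℝ³ → ℝ be C¹ with all integrals below finite, set D = ∫_{ℝ³}|∇u|², and assume: (i) (a/2)D + (1/2)∫(V+λW)u² + (b/4)D² − ∫F(u) − (λ/r)∫|u|^r ≤ C; (ii) aD + ∫(V+λW)u² + bD² − ∫ f(u)u − λ∫|u|^r = 0; (iii) (a/2)D + (3/2)∫(V+λW)u² + (1/2)∫(x·∇V(x) + λ x·∇W(x))u² + (b/2)D² − 3∫(F(u)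 + (λ/r)|u|^r) = 0. Then a·((3μ−2)/(2μ))·D + ((μ−2)/(2μ))·b·D² + λ·((r−μ)/(μr))·∫|u|^r ≤ 4C; in particular D ≤ C₅ for a constant C₅ depending only on a, b, μ, r and C (and not on λ). -/
open MeasureTheory Filter Topology

noncomputable section

set_option maxHeartbeats 800000 in
/-- **Lemma 3.4 (uniform bound on the Dirichlet energy).** Combining the energy bound
(i), the Nehari identity (ii), and the Pohozaev identity (iii) with weights
`4, −1/μ, −1` yields
`a(3μ−2)/(2μ)·D + (μ−2)/(2μ)·b·D² + λ(r−μ)/(μr)·∫|u|^r ≤ 4C`; in particular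
`D = ∫|∇u|² ≤ C₅` for a constant `C₅` depending only on `a, b, μ, r, C` (not on `λ`). -/
theorem uniform_bound_from_three_identities
    (a b μ r C : ℝ) (ha : 0 < a) (hb : 0 < b)
    (hμ : 2 < μ) (hμr : μ < r) (hC : 0 < C) :
    ∃ C₅ : ℝ, 0 < C₅ ∧
    ∀ (lam : ℝ), 0 ≤ lam →
    ∀ (f : ℝ → ℝ), Continuous f →
    (∀ u : ℝ, u ≠ 0 → 0 < μ * primitive f u ∧ μ * primitive f u ≤ u * f u) →
    ∀ (V W : R3 → ℝ), ContDiff ℝ 1 V → ContDiff ℝ 1 W →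
    (∀ x : R3, 0 ≤ fderiv ℝ V x x ∧ fderiv ℝ V x x ≤ (μ - 2) / μ * V x) →
    (∀ x : R3, 0 ≤ fderiv ℝ W x x ∧ fderiv ℝ W x x ≤ (μ - 2) / μ * W x) →
    ∀ (u : R3 → ℝ), ContDiff ℝ 1 u →
    Integrable (fun x : R3 => ‖fderiv ℝ u x‖ ^ 2) →
    Integrable (fun x : R3 => V x * (u x) ^ 2) →
    Integrable (fun x : R3 => W x * (u x) ^ 2) →
    Integrable (fun x : R3 => fderiv ℝ V x x * (u x) ^ 2) →
    Integrable (fun x : R3 => fderiv ℝ W x x * (u x) ^ 2) →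
    Integrable (fun x : R3 => primitive f (u x)) →
    Integrable (fun x : R3 => f (u x) * u x) →
    Integrable (fun x : R3 => |u x| ^ r) →
    ∀ D : ℝ, D = (∫ x : R3, ‖fderiv ℝ u x‖ ^ 2) →
    -- (i) energy bound `I_λ(u) ≤ C`
    (a/2) * D + (1/2) * (∫ x : R3, (V x + lam * W x) * (u x) ^ 2) + (b/4) * D ^ 2
        - (∫ x : R3, primitive f (u x)) - (lam/r) * (∫ x : R3, |u x| ^ r) ≤ C →
    -- (ii) Nehari identity `I'_λ(u)u = 0`
    a * D + (∫ x : R3, (V x + lam * W x) * (u x) ^ 2) + b * D ^ 2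
        - (∫ x : R3, f (u x) * u x) - lam * (∫ x : R3, |u x| ^ r) = 0 →
    -- (iii) Pohozaev identity
    (a/2) * D + (3/2) * (∫ x : R3, (V x + lam * W x) * (u x) ^ 2)
        + (1/2) * (∫ x : R3, (fderiv ℝ V x x + lam * fderiv ℝ W x x) * (u x) ^ 2)
        + (b/2) * D ^ 2
        - 3 * (∫ x : R3, (primitive f (u x) + (lam/r) * |u x| ^ r)) = 0 →
    a * ((3*μ - 2)/(2*μ)) * D + ((μ - 2)/(2*μ)) * b * D ^ 2
        + lam * ((r - μ)/(μ*r)) * (∫ x : R3, |u x| ^ r) ≤ 4 * C ∧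
    D ≤ C₅ := by
  have hμ0 : (0:ℝ) < μ := by linarith
  have hr0 : (0:ℝ) < r := by linarith
  have hμne : μ ≠ 0 := hμ0.ne'
  have hrne : r ≠ 0 := hr0.ne'
  refine ⟨8*μ*C/(a*(3*μ-2)), div_pos (by positivity) (mul_pos ha (by linarith)), ?_⟩
  intro lam hlam f hfc hf V W hVc hWc hV hW u huc hIgrad hIV hIW hIdV hIdW hIF hIN hIR
    D hDdef h1 h2 h3
  -- nonnegativity
  have hRnn : 0 ≤ (∫ x : R3, |u x| ^ r) := integral_nonneg fun x => by positivity
  have hDnn : 0 ≤ D := hDdef ▸ integral_nonneg fun x => by positivity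
  -- integrability of combined integrands
  have hIP : Integrable (fun x : R3 => (V x + lam * W x) * (u x) ^ 2) := by
    have e : (fun x : R3 => (V x + lam * W x) * (u x) ^ 2)
        = fun x : R3 => V x * (u x) ^ 2 + lam * (W x * (u x) ^ 2) := by
      funext x; ring
    rw [e]; exact hIV.add (hIW.const_mul lam)
  have hIQ : Integrable (fun x : R3 => (fderiv ℝ V x x + lam * fderiv ℝ W x x) * (u x) ^ 2) := by
    have e : (fun x : R3 => (fderiv ℝ V x x + lam * fderiv ℝ W x x) * (u x) ^ 2)
        = fun x : R3 => fderiv ℝ V x x * (u x) ^ 2 + lam * (fderiv ℝ W x x * (u x) ^ 2) := by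
      funext x; ring
    rw [e]; exact hIdV.add (hIdW.const_mul lam)
  -- pointwise comparison integrated
  have hQle : (∫ x : R3, (fderiv ℝ V x x + lam * fderiv ℝ W x x) * (u x) ^ 2)
      ≤ (μ - 2) / μ * ∫ x : R3, (V x + lam * W x) * (u x) ^ 2 := by
    rw [← integral_const_mul]
    refine integral_mono hIQ (hIP.const_mul _) fun x => ?_
    have h1x := mul_le_mul_of_nonneg_right (hV x).2 (sq_nonneg (u x))
    have h2x := mul_le_mul_of_nonneg_left
      (mul_le_mul_of_nonneg_right (hW x).2 (sq_nonneg (u x))) hlam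
    simp only []
    nlinarith [h1x, h2x]
  have hFle : (∫ x : R3, primitive f (u x)) ≤ 1/μ * ∫ x : R3, f (u x) * u x := by
    rw [← integral_const_mul]
    refine integral_mono hIF (hIN.const_mul _) fun x => ?_
    rcases eq_or_ne (u x) 0 with hx | hx
    · simp [primitive, hx]
    · have h := (hf _ hx).2
      have h' : primitive f (u x) ≤ (u x * f (u x)) / μ := by
        rw [le_div_iff₀ hμ0]; linarith
      have e : (u x * f (u x)) / μ = 1/μ * (f (u x) * u x) := by ring
      simp only []
      linarith [h', e.le, e.ge]
  -- split the Pohozaev integral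
  have hsplit : (∫ x : R3, (primitive f (u x) + (lam/r) * |u x| ^ r))
      = (∫ x : R3, primitive f (u x)) + (lam/r) * ∫ x : R3, |u x| ^ r := by
    rw [integral_add hIF (hIR.const_mul _), integral_const_mul]
  rw [hsplit] at h3
  -- abbreviate the integrals
  set Pv := (∫ x : R3, (V x + lam * W x) * (u x) ^ 2) with hPv
  set Qv := (∫ x : R3, (fderiv ℝ V x x + lam * fderiv ℝ W x x) * (u x) ^ 2) with hQv
  set Fv := (∫ x : R3, primitive f (u x)) with hFv
  set Nv := (∫ x : R3, f (u x) * u x) with hNv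
  set Rv := (∫ x : R3, |u x| ^ r) with hRvdef
  -- cleared-denominator versions
  have hQP' : μ * Qv ≤ (μ - 2) * Pv := by
    have h := mul_le_mul_of_nonneg_left hQle hμ0.le
    have e : μ * ((μ - 2) / μ * Pv) = (μ - 2) * Pv := by field_simp
    linarith [h, e.le, e.ge]
  have hFN' : μ * Fv ≤ Nv := by
    have h := mul_le_mul_of_nonneg_left hFle hμ0.le
    have e : μ * (1/μ * Nv) = Nv := by field_simp
    linarith [h, e.le, e.ge]
  have hQPr : r * (μ * Qv) ≤ r * ((μ - 2) * Pv) := mul_le_mul_of_nonneg_left hQP' hr0.le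
  have hFNr : r * (μ * Fv) ≤ r * Nv := mul_le_mul_of_nonneg_left hFN' hr0.le
  have h1m := mul_le_mul_of_nonneg_left h1 (show (0:ℝ) ≤ 8*μ*r by positivity)
  have h2m : 2*r*(a * D + Pv + b * D ^ 2 - Nv - lam * Rv) = 0 := by rw [h2, mul_zero]
  have h3m : 2*μ*r*(a/2 * D + 3/2 * Pv + 1/2 * Qv + b/2 * D ^ 2 - 3 * (Fv + lam/r * Rv)) = 0 := by
    rw [h3, mul_zero]
  have e1 : μ * r * (lam / r * Rv) = μ * (lam * Rv) := by field_simp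
  have key : r*a*(3*μ-2)*D + r*(μ-2)*b*D^2 + 2*lam*(r-μ)*Rv ≤ 8*μ*r*C := by
    linarith [h1m, h2m, h3m, hQPr, hFNr, e1.le, e1.ge]
  constructor
  · have e2 : a * ((3*μ - 2)/(2*μ)) * D + ((μ - 2)/(2*μ)) * b * D ^ 2
        + lam * ((r - μ)/(μ*r)) * Rv
        = (r*a*(3*μ-2)*D + r*(μ-2)*b*D^2 + 2*lam*(r-μ)*Rv) / (2*μ*r) := by
      field_simp
    rw [e2, div_le_iff₀ (by positivity)]
    linarith [key]
  · -- D ≤ C₅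
    have hD2nn : 0 ≤ ((μ - 2)/(2*μ)) * b * D ^ 2 :=
      mul_nonneg (mul_nonneg (div_nonneg (by linarith) (by linarith)) hb.le) (sq_nonneg D)
    have hlRnn : 0 ≤ lam * ((r - μ)/(μ*r)) * Rv :=
      mul_nonneg (mul_nonneg hlam (div_nonneg (by linarith) (by positivity))) hRnn
    have e2 : a * ((3*μ - 2)/(2*μ)) * D + ((μ - 2)/(2*μ)) * b * D ^ 2
        + lam * ((r - μ)/(μ*r)) * Rv
        = (r*a*(3*μ-2)*D + r*(μ-2)*b*D^2 + 2*lam*(r-μ)*Rv) / (2*μ*r) := by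
      field_simp
    have hDb : a * ((3*μ - 2)/(2*μ)) * D ≤ 4 * C := by
      have : a * ((3*μ - 2)/(2*μ)) * D + ((μ - 2)/(2*μ)) * b * D ^ 2
          + lam * ((r - μ)/(μ*r)) * Rv ≤ 4 * C := by
        rw [e2, div_le_iff₀ (by positivity)]; linarith [key]
      linarith
    rw [le_div_iff₀ (mul_pos ha (by linarith : (0:ℝ) < 3*μ-2))]
    have e4 : a * ((3*μ - 2)/(2*μ)) * D = D * (a * (3*μ - 2)) / (2*μ) := by ring
    rw [e4, div_le_iff₀ (by positivity)] at hDb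
    linarith [hDb]
end
end

section
/- Let a, b > 0, μ ∈ (2, r), λ ∈ (0,1]. Let f : ℝ → ℝ be continuous with u·f(u) ≥ μ·F(u) > 0 for u ≠ 0 (F(u) = ∫₀^u f(s) ds), and let V, W ∈ C¹(ℝ³,ℝ) satisfy pointwise 0 ≤ x·∇V(x) ≤ ((μ−2)/μ)V(x) and 0 ≤ x·∇W(x) ≤ ((μ−2)/μ)W(x). Let u : ℝ³ → ℝ be C¹ with all integrals below finite and set D = ∫_{ℝ³}|∇u|². If u satisfies the ∂P-identity ((μ+2)a/(2μ))D + ((2+3μ)/(2μ))∫V u² + (1/2)∫(x·∇V)u² + ((2+3μ)λ/(2μ))∫W u² + (λ/2)∫(x·∇W)u² + ((μ+2)b/(2μ))D² = ∫((1/μ)f(u)u + 3F(u)) + ((r+3μ)λ/(μr))∫|u|^r, then I_λ(u) ≥ a·((3μ−2)/(8μ))·D + ((μ−2)/(8μ))·b·D² + λ·((r−μ)/(4μr))·∫|u|^r. -/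
open MeasureTheory Filter Topology

noncomputable section

/-- **Estimate (4.2) on the set `∂P`.** If `u` satisfies the `∂P`-identity
(the combination `(1/μ)·Nehari + Pohozaev` for `I_λ`), then
`I_λ(u) ≥ a(3μ−2)/(8μ)·D + (μ−2)/(8μ)·b·D² + λ(r−μ)/(4μr)·∫|u|^r`. -/
theorem energy_lower_bound_on_partialP
    (a b μ r lam : ℝ) (ha : 0 < a) (hb : 0 < b)
    (hμ : 2 < μ) (hμr : μ < r) (hlam : lam ∈ Set.Ioc (0:ℝ) 1)
    (f : ℝ → ℝ) (hf : Continuous f)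
    (hf3 : ∀ u : ℝ, u ≠ 0 → 0 < μ * primitive f u ∧ μ * primitive f u ≤ u * f u)
    (V W : R3 → ℝ) (hV : ContDiff ℝ 1 V) (hW : ContDiff ℝ 1 W)
    (hV4 : ∀ x : R3, 0 ≤ fderiv ℝ V x x ∧ fderiv ℝ V x x ≤ (μ - 2) / μ * V x)
    (hW4 : ∀ x : R3, 0 ≤ fderiv ℝ W x x ∧ fderiv ℝ W x x ≤ (μ - 2) / μ * W x)
    (u : R3 → ℝ) (hu : ContDiff ℝ 1 u)
    (hi1 : Integrable (fun x : R3 => ‖fderiv ℝ u x‖ ^ 2))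
    (hi2 : Integrable (fun x : R3 => V x * (u x) ^ 2))
    (hi3 : Integrable (fun x : R3 => W x * (u x) ^ 2))
    (hi4 : Integrable (fun x : R3 => fderiv ℝ V x x * (u x) ^ 2))
    (hi5 : Integrable (fun x : R3 => fderiv ℝ W x x * (u x) ^ 2))
    (hi6 : Integrable (fun x : R3 => primitive f (u x)))
    (hi7 : Integrable (fun x : R3 => f (u x) * u x))
    (hi8 : Integrable (fun x : R3 => |u x| ^ r))
    (D : ℝ) (hD : D = ∫ x : R3, ‖fderiv ℝ u x‖ ^ 2)
    -- the `∂P`-identity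
    (hP : ((μ + 2) * a / (2 * μ)) * D
        + ((2 + 3 * μ) / (2 * μ)) * (∫ x : R3, V x * (u x) ^ 2)
        + (1/2) * (∫ x : R3, fderiv ℝ V x x * (u x) ^ 2)
        + ((2 + 3 * μ) * lam / (2 * μ)) * (∫ x : R3, W x * (u x) ^ 2)
        + (lam/2) * (∫ x : R3, fderiv ℝ W x x * (u x) ^ 2)
        + ((μ + 2) * b / (2 * μ)) * D ^ 2
      = (∫ x : R3, ((1/μ) * f (u x) * u x + 3 * primitive f (u x)))
        + ((r + 3 * μ) * lam / (μ * r)) * (∫ x : R3, |u x| ^ r)) :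
    a * ((3 * μ - 2)/(8 * μ)) * D + ((μ - 2)/(8 * μ)) * b * D ^ 2
        + lam * ((r - μ)/(4 * μ * r)) * (∫ x : R3, |u x| ^ r)
      ≤ (1/2) * (a * D + (∫ x : R3, (V x + lam * W x) * (u x) ^ 2)) + (b/4) * D ^ 2
        - (∫ x : R3, primitive f (u x)) - (lam/r) * (∫ x : R3, |u x| ^ r) := by
  obtain ⟨hlam0, hlam1⟩ := hlam
  have hμ0 : (0:ℝ) < μ := by linarith
  have hr0 : (0:ℝ) < r := by linarith
  have hμ0' : μ ≠ 0 := ne_of_gt hμ0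
  have hr0' : r ≠ 0 := ne_of_gt hr0
  -- abbreviations
  set IV := ∫ x : R3, V x * (u x) ^ 2 with hIVdef
  set IW := ∫ x : R3, W x * (u x) ^ 2 with hIWdef
  set JV := ∫ x : R3, fderiv ℝ V x x * (u x) ^ 2 with hJVdef
  set JW := ∫ x : R3, fderiv ℝ W x x * (u x) ^ 2 with hJWdef
  set IF := ∫ x : R3, primitive f (u x) with hIFdef
  set Ifu := ∫ x : R3, f (u x) * u x with hIfudef
  set Ir := ∫ x : R3, |u x| ^ r with hIrdef
  -- superposition inequality from (f3)
  have h1 : μ * IF ≤ Ifu := by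
    rw [hIFdef, hIfudef, ← integral_const_mul]
    refine integral_mono (hi6.const_mul μ) hi7 (fun x => ?_)
    rcases eq_or_ne (u x) 0 with h | h
    · simp [h, primitive]
    · calc μ * primitive f (u x) ≤ u x * f (u x) := (hf3 (u x) h).2
        _ = f (u x) * u x := mul_comm _ _
  -- inequality from (V4)
  have h2 : μ * JV ≤ (μ - 2) * IV := by
    rw [hJVdef, hIVdef, ← integral_const_mul, ← integral_const_mul]
    refine integral_mono (hi4.const_mul μ) (hi2.const_mul (μ - 2)) (fun x => ?_)
    have hb' : fderiv ℝ V x x * (u x) ^ 2 ≤ (μ - 2) / μ * V x * (u x) ^ 2 :=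
      mul_le_mul_of_nonneg_right (hV4 x).2 (sq_nonneg _)
    calc μ * (fderiv ℝ V x x * (u x) ^ 2) ≤ μ * ((μ - 2) / μ * V x * (u x) ^ 2) :=
          mul_le_mul_of_nonneg_left hb' hμ0.le
      _ = (μ - 2) * (V x * (u x) ^ 2) := by field_simp
  -- inequality from (W4)
  have h3 : μ * JW ≤ (μ - 2) * IW := by
    rw [hJWdef, hIWdef, ← integral_const_mul, ← integral_const_mul]
    refine integral_mono (hi5.const_mul μ) (hi3.const_mul (μ - 2)) (fun x => ?_)
    have hb' : fderiv ℝ W x x * (u x) ^ 2 ≤ (μ - 2) / μ * W x * (u x) ^ 2 :=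
      mul_le_mul_of_nonneg_right (hW4 x).2 (sq_nonneg _)
    calc μ * (fderiv ℝ W x x * (u x) ^ 2) ≤ μ * ((μ - 2) / μ * W x * (u x) ^ 2) :=
          mul_le_mul_of_nonneg_left hb' hμ0.le
      _ = (μ - 2) * (W x * (u x) ^ 2) := by field_simp
  -- split the integrals appearing in the goal and in `hP`
  have hsplit1 : (∫ x : R3, (V x + lam * W x) * (u x) ^ 2) = IV + lam * IW := by
    rw [hIVdef, hIWdef, ← integral_const_mul, ← integral_add hi2 (hi3.const_mul lam)]
    congr 1; ext x; ring
  have hsplit2 : (∫ x : R3, ((1/μ) * f (u x) * u x + 3 * primitive f (u x)))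
      = (1/μ) * Ifu + 3 * IF := by
    rw [hIfudef, hIFdef, ← integral_const_mul, ← integral_const_mul,
      ← integral_add ((hi7.const_mul (1/μ))) (hi6.const_mul 3)]
    congr 1; ext x; ring
  rw [hsplit2] at hP
  rw [hsplit1]
  -- the key algebraic identity
  have key : ((1/2) * (a * D + (IV + lam * IW)) + (b/4) * D ^ 2 - IF - (lam/r) * Ir)
      - (a * ((3 * μ - 2)/(8 * μ)) * D + ((μ - 2)/(8 * μ)) * b * D ^ 2
        + lam * ((r - μ)/(4 * μ * r)) * Ir)
      = (1/(4*μ)) * (Ifu - μ * IF) + (1/(8*μ)) * ((μ - 2) * IV - μ * JV)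
        + (lam/(8*μ)) * ((μ - 2) * IW - μ * JW) := by
    linear_combination (norm := (field_simp; ring)) (1/4 : ℝ) * hP
  have t1 : 0 ≤ (1/(4*μ)) * (Ifu - μ * IF) := by
    apply mul_nonneg (by positivity); linarith
  have t2 : 0 ≤ (1/(8*μ)) * ((μ - 2) * IV - μ * JV) := by
    apply mul_nonneg (by positivity); linarith
  have t3 : 0 ≤ (lam/(8*μ)) * ((μ - 2) * IW - μ * JW) := by
    apply mul_nonneg (by positivity); linarith
  linarith [key, t1, t2, t3]
end
end
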